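/- arXiv:math/0305230 — 8 statements merged into one kernel-verified Lean document; each statement's English description precedes it below -/
import Mathlib

section
/- Let f : [a,b] → ℝ be differentiable on (a,b) with |f'(t)| ≤ M for all t ∈ (a,b). Then for all x ∈ [a,b], |f(x) - (1/(b-a))∫_a^b f(t) dt| ≤ [1/4 + ((x - (a+b)/2)/(b-a))²](b-a)M. -/
theorem ostrowski_inequality (a b : ℝ) (hab : a < b) (f f' : ℝ → ℝ) (M : ℝ) (hM : 0 ≤ M)
    (hfc : ContinuousOn f (Set.Icc a b))
    (hf' : ∀ t ∈ Set.Ioo a b, HasDerivAt f (f' t) t)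
    (hbound : ∀ t ∈ Set.Ioo a b, |f' t| ≤ M)
    (x : ℝ) (hx : x ∈ Set.Icc a b) :
    |f x - (1 / (b - a)) * ∫ t in a..b, f t| ≤
      (1 / 4 + ((x - (a + b) / 2) / (b - a)) ^ 2) * (b - a) * M := by
  obtain ⟨hax, hxb⟩ := hx
  have hab' : (0:ℝ) < b - a := by linarith
  -- Lipschitz bound from MVT
  have lip0 : ∀ s t : ℝ, s ∈ Set.Icc a b → t ∈ Set.Icc a b → s < t →
      |f t - f s| ≤ M * (t - s) := by
    intro s t hs ht hst
    have hsub : Set.Icc s t ⊆ Set.Icc a b := Set.Icc_subset_Icc hs.1 ht.2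
    have hsub' : Set.Ioo s t ⊆ Set.Ioo a b := Set.Ioo_subset_Ioo hs.1 ht.2
    obtain ⟨c, hc, hc'⟩ := exists_hasDerivAt_eq_slope f f' hst (hfc.mono hsub)
      (fun y hy => hf' y (hsub' hy))
    have hMc := hbound c (hsub' hc)
    rw [eq_div_iff (sub_ne_zero.2 hst.ne')] at hc'
    rw [← hc', abs_mul, abs_of_pos (by linarith : (0:ℝ) < t - s)]
    exact mul_le_mul_of_nonneg_right hMc (by linarith)
  have lip : ∀ t ∈ Set.Icc a b, |f x - f t| ≤ M * |x - t| := by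
    intro t ht
    rcases lt_trichotomy x t with h | h | h
    · rw [abs_sub_comm, abs_of_neg (by linarith : x - t < 0)]
      have := lip0 x t ⟨hax, hxb⟩ ht h
      linarith [this]
    · simp [h]
    · rw [abs_of_pos (by linarith : (0:ℝ) < x - t)]
      exact lip0 t x ht ⟨hax, hxb⟩ h
  -- integrability
  have hfi : IntervalIntegrable f MeasureTheory.volume a b :=
    (hfc.mono (by rw [Set.uIcc_of_le hab.le])).intervalIntegrable
  have hgi : IntervalIntegrable (fun t => |f x - f t|) MeasureTheory.volume a b := by
    apply ContinuousOn.intervalIntegrable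
    rw [Set.uIcc_of_le hab.le]
    exact (continuousOn_const.sub hfc).abs
  have hhi : IntervalIntegrable (fun t => M * |x - t|) MeasureTheory.volume a b :=
    (Continuous.intervalIntegrable (by continuity) a b)
  -- rewrite the LHS
  have key : f x - (1 / (b - a)) * ∫ t in a..b, f t
      = (1 / (b - a)) * ∫ t in a..b, (f x - f t) := by
    rw [intervalIntegral.integral_sub intervalIntegrable_const hfi,
      intervalIntegral.integral_const]
    field_simp
    ring
  rw [key, abs_mul, abs_of_pos (by positivity : (0:ℝ) < 1 / (b - a))]
  -- bound the integral
  have step1 : |∫ t in a..b, (f x - f t)| ≤ ∫ t in a..b, |f x - f t| :=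
    intervalIntegral.abs_integral_le_integral_abs hab.le
  have step2 : (∫ t in a..b, |f x - f t|) ≤ ∫ t in a..b, M * |x - t| := by
    apply intervalIntegral.integral_mono_on hab.le hgi hhi
    intro t ht
    exact lip t ht
  -- compute ∫ t in a..b, |x - t|
  have habs : (∫ t in a..b, |x - t|) = ((x - a) ^ 2 + (b - x) ^ 2) / 2 := by
    have hi1 : IntervalIntegrable (fun t => |x - t|) MeasureTheory.volume a x :=
      Continuous.intervalIntegrable (by continuity) a x
    have hi2 : IntervalIntegrable (fun t => |x - t|) MeasureTheory.volume x b :=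
      Continuous.intervalIntegrable (by continuity) x b
    rw [← intervalIntegral.integral_add_adjacent_intervals hi1 hi2]
    have e1 : (∫ t in a..x, |x - t|) = ∫ t in a..x, (x - t) := by
      apply intervalIntegral.integral_congr
      intro t ht
      rw [Set.uIcc_of_le hax] at ht
      exact abs_of_nonneg (by linarith [ht.2])
    have e2 : (∫ t in x..b, |x - t|) = ∫ t in x..b, (t - x) := by
      apply intervalIntegral.integral_congr
      intro t ht
      rw [Set.uIcc_of_le hxb] at ht
      show |x - t| = t - x
      rw [abs_sub_comm]
      exact abs_of_nonneg (by linarith [ht.1])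
    rw [e1, e2]
    have v1 : (∫ t in a..x, (x - t)) = x * (x - a) - (x ^ 2 - a ^ 2) / 2 := by
      rw [intervalIntegral.integral_sub intervalIntegrable_const
        intervalIntegral.intervalIntegrable_id,
        intervalIntegral.integral_const, integral_id]
      simp [smul_eq_mul]; ring
    have v2 : (∫ t in x..b, (t - x)) = (b ^ 2 - x ^ 2) / 2 - x * (b - x) := by
      rw [intervalIntegral.integral_sub
        intervalIntegral.intervalIntegrable_id intervalIntegrable_const,
        integral_id, intervalIntegral.integral_const]
      simp [smul_eq_mul]; ring
    rw [v1, v2]; ring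
  have step3 : (∫ t in a..b, M * |x - t|) = M * (((x - a) ^ 2 + (b - x) ^ 2) / 2) := by
    rw [intervalIntegral.integral_const_mul, habs]
  have chain : |∫ t in a..b, (f x - f t)| ≤ M * (((x - a) ^ 2 + (b - x) ^ 2) / 2) := by
    rw [← step3]; exact step1.trans step2
  calc 1 / (b - a) * |∫ t in a..b, (f x - f t)|
      ≤ 1 / (b - a) * (M * (((x - a) ^ 2 + (b - x) ^ 2) / 2)) := by
        exact mul_le_mul_of_nonneg_left chain (by positivity)
    _ = (1 / 4 + ((x - (a + b) / 2) / (b - a)) ^ 2) * (b - a) * M := by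
        field_simp
        ring
end

section
/- Let f, g : [a,b] → ℝ be continuous on [a,b] and differentiable on (a,b) with g'(t) ≠ 0 for all t ∈ (a,b), and suppose |f'(t)/g'(t)| ≤ K for all t ∈ (a,b). Then for all x ∈ [a,b]: |f(x) - (1/(b-a))∫_a^b f(t) dt| ≤ |2((x - (a+b)/2)/(b-a))·g(x) + (∫_x^b g(t) dt - ∫_a^x g(t) dt)/(b-a)| · K. -/
open Set intervalIntegral MeasureTheory

lemma aux_ostrowski (a b x : ℝ) (hab : a < b) (hx : x ∈ Set.Icc a b)
    (f g : ℝ → ℝ) (K : ℝ) (hK0 : 0 ≤ K)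
    (hfc : ContinuousOn f (Set.Icc a b)) (hgc : ContinuousOn g (Set.Icc a b))
    (hmono : MonotoneOn g (Set.Icc a b))
    (hkey : ∀ s ∈ Set.Icc a b, ∀ t ∈ Set.Icc a b, |f t - f s| ≤ K * |g t - g s|) :
    |f x - (1 / (b - a)) * ∫ t in a..b, f t| ≤
      (2 * ((x - (a + b) / 2) / (b - a)) * g x +
        ((∫ t in x..b, g t) - ∫ t in a..x, g t) / (b - a)) * K := by
  obtain ⟨hax, hxb⟩ := hx
  have hba : (0:ℝ) < b - a := by linarith
  have hxmem : x ∈ Set.Icc a b := ⟨hax, hxb⟩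
  -- integrability
  have hfi : IntervalIntegrable f volume a b := by
    apply ContinuousOn.intervalIntegrable; rwa [Set.uIcc_of_le hab.le]
  have hgi1 : IntervalIntegrable g volume a x := by
    apply ContinuousOn.intervalIntegrable
    rw [Set.uIcc_of_le hax]; exact hgc.mono (Set.Icc_subset_Icc le_rfl hxb)
  have hgi2 : IntervalIntegrable g volume x b := by
    apply ContinuousOn.intervalIntegrable
    rw [Set.uIcc_of_le hxb]; exact hgc.mono (Set.Icc_subset_Icc hax le_rfl)
  have hFc : ContinuousOn (fun t => |f x - f t|) (Set.Icc a b) :=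
    (continuousOn_const.sub hfc).abs
  have hGc : ContinuousOn (fun t => |g x - g t|) (Set.Icc a b) :=
    (continuousOn_const.sub hgc).abs
  have hFi : IntervalIntegrable (fun t => |f x - f t|) volume a b := by
    apply ContinuousOn.intervalIntegrable; rwa [Set.uIcc_of_le hab.le]
  have hGi : IntervalIntegrable (fun t => |g x - g t|) volume a b := by
    apply ContinuousOn.intervalIntegrable; rwa [Set.uIcc_of_le hab.le]
  have hGi1 : IntervalIntegrable (fun t => |g x - g t|) volume a x := by
    apply ContinuousOn.intervalIntegrable
    rw [Set.uIcc_of_le hax]; exact hGc.mono (Set.Icc_subset_Icc le_rfl hxb)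
  have hGi2 : IntervalIntegrable (fun t => |g x - g t|) volume x b := by
    apply ContinuousOn.intervalIntegrable
    rw [Set.uIcc_of_le hxb]; exact hGc.mono (Set.Icc_subset_Icc hax le_rfl)
  -- piecewise computation of ∫ |g x - g t|
  have e1 : (∫ t in a..x, |g x - g t|) = (x - a) * g x - ∫ t in a..x, g t := by
    have : (∫ t in a..x, |g x - g t|) = ∫ t in a..x, (g x - g t) := by
      apply intervalIntegral.integral_congr
      intro t ht
      rw [Set.uIcc_of_le hax] at ht
      have htm : t ∈ Set.Icc a b := ⟨ht.1, ht.2.trans hxb⟩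
      exact abs_of_nonneg (sub_nonneg.2 (hmono htm hxmem ht.2))
    rw [this, intervalIntegral.integral_sub intervalIntegrable_const hgi1,
      intervalIntegral.integral_const, smul_eq_mul]
  have e2 : (∫ t in x..b, |g x - g t|) = (∫ t in x..b, g t) - (b - x) * g x := by
    have : (∫ t in x..b, |g x - g t|) = ∫ t in x..b, (g t - g x) := by
      apply intervalIntegral.integral_congr
      intro t ht
      rw [Set.uIcc_of_le hxb] at ht
      have htm : t ∈ Set.Icc a b := ⟨hax.trans ht.1, ht.2⟩
      exact (abs_sub_comm (g x) (g t)).trans (abs_of_nonneg (sub_nonneg.2 (hmono hxmem htm ht.1)))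
    rw [this, intervalIntegral.integral_sub hgi2 intervalIntegrable_const,
      intervalIntegral.integral_const, smul_eq_mul]
  have e3 : (∫ t in a..b, |g x - g t|) =
      ((x - a) * g x - ∫ t in a..x, g t) + ((∫ t in x..b, g t) - (b - x) * g x) := by
    rw [← e1, ← e2, intervalIntegral.integral_add_adjacent_intervals hGi1 hGi2]
  -- rewrite LHS
  have eqA : (∫ t in a..b, (f x - f t)) = (b - a) * f x - ∫ t in a..b, f t := by
    rw [intervalIntegral.integral_sub intervalIntegrable_const hfi,
      intervalIntegral.integral_const, smul_eq_mul]
  have eqB : f x - (1 / (b - a)) * ∫ t in a..b, f t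
      = (1 / (b - a)) * ∫ t in a..b, (f x - f t) := by
    rw [eqA]; field_simp
  have habs : |∫ t in a..b, (f x - f t)| ≤ ∫ t in a..b, |f x - f t| :=
    intervalIntegral.abs_integral_le_integral_abs hab.le
  have hFGi : IntervalIntegrable (fun t => K * |g x - g t|) volume a b := hGi.const_mul K
  have hmono_int : (∫ t in a..b, |f x - f t|) ≤ ∫ t in a..b, K * |g x - g t| := by
    apply intervalIntegral.integral_mono_on hab.le hFi hFGi
    intro t ht
    have := hkey t ht x hxmem
    rwa [abs_sub_comm (f x), abs_sub_comm (g x)] at *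
  have hconst : (∫ t in a..b, K * |g x - g t|) = K * ∫ t in a..b, |g x - g t| :=
    intervalIntegral.integral_const_mul K _
  rw [eqB, abs_mul, abs_of_pos (one_div_pos.2 hba)]
  calc (1 / (b - a)) * |∫ t in a..b, (f x - f t)|
      ≤ (1 / (b - a)) * (K * ∫ t in a..b, |g x - g t|) := by
        apply mul_le_mul_of_nonneg_left _ (le_of_lt (one_div_pos.2 hba))
        rw [← hconst]; exact habs.trans hmono_int
    _ = (2 * ((x - (a + b) / 2) / (b - a)) * g x +
        ((∫ t in x..b, g t) - ∫ t in a..x, g t) / (b - a)) * K := by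
        rw [e3]; field_simp; ring

theorem ostrowski_cauchy (a b : ℝ) (hab : a < b) (f g f' g' : ℝ → ℝ) (K : ℝ)
    (hfc : ContinuousOn f (Set.Icc a b)) (hgc : ContinuousOn g (Set.Icc a b))
    (hf' : ∀ t ∈ Set.Ioo a b, HasDerivAt f (f' t) t)
    (hg' : ∀ t ∈ Set.Ioo a b, HasDerivAt g (g' t) t)
    (hg0 : ∀ t ∈ Set.Ioo a b, g' t ≠ 0)
    (hK : ∀ t ∈ Set.Ioo a b, |f' t / g' t| ≤ K)
    (x : ℝ) (hx : x ∈ Set.Icc a b) :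
    |f x - (1 / (b - a)) * ∫ t in a..b, f t| ≤
      |2 * ((x - (a + b) / 2) / (b - a)) * g x +
        ((∫ t in x..b, g t) - ∫ t in a..x, g t) / (b - a)| * K := by
  have hmid : (a + b) / 2 ∈ Set.Ioo a b := ⟨by linarith, by linarith⟩
  have hK0 : 0 ≤ K := le_trans (abs_nonneg _) (hK _ hmid)
  -- key pointwise inequality via Cauchy MVT
  have hkey : ∀ s ∈ Set.Icc a b, ∀ t ∈ Set.Icc a b, |f t - f s| ≤ K * |g t - g s| := by
    have main : ∀ s ∈ Set.Icc a b, ∀ t ∈ Set.Icc a b, s < t → |f t - f s| ≤ K * |g t - g s| := by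
      intro s hs t ht hst
      have hsub : Set.Icc s t ⊆ Set.Icc a b := Set.Icc_subset_Icc hs.1 ht.2
      have hsubo : Set.Ioo s t ⊆ Set.Ioo a b := Set.Ioo_subset_Ioo hs.1 ht.2
      obtain ⟨c, hc, heq⟩ := exists_ratio_hasDerivAt_eq_ratio_slope f f' hst
        (hfc.mono hsub) (fun y hy => hf' y (hsubo hy)) g g'
        (hgc.mono hsub) (fun y hy => hg' y (hsubo hy))
      have hc' : c ∈ Set.Ioo a b := hsubo hc
      have hgc0 : g' c ≠ 0 := hg0 c hc'
      have hval : f t - f s = (g t - g s) * (f' c / g' c) := by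
        field_simp
        linarith [heq]
      calc |f t - f s| = |g t - g s| * |f' c / g' c| := by rw [hval, abs_mul]
        _ ≤ |g t - g s| * K := mul_le_mul_of_nonneg_left (hK c hc') (abs_nonneg _)
        _ = K * |g t - g s| := mul_comm _ _
    intro s hs t ht
    rcases lt_trichotomy s t with h | h | h
    · exact main s hs t ht h
    · subst h; simp [hK0]
    · rw [abs_sub_comm (f t), abs_sub_comm (g t)]
      exact main t ht s hs h
  have hder : ∀ t ∈ Set.Ioo a b, HasDerivWithinAt g (g' t) (Set.Ioo a b) t :=
    fun t ht => (hg' t ht).hasDerivWithinAt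
  have hderI : ∀ t ∈ interior (Set.Icc a b), HasDerivWithinAt g (g' t) (interior (Set.Icc a b)) t := by
    rw [interior_Icc]; exact hder
  rcases hasDerivWithinAt_forall_lt_or_forall_gt_of_forall_ne (convex_Ioo a b) hder hg0
    with hneg | hpos
  · -- g strictly antitone; apply aux to -g
    have hanti : StrictAntiOn g (Set.Icc a b) :=
      strictAntiOn_of_hasDerivWithinAt_neg (convex_Icc a b) hgc hderI
        (by rw [interior_Icc]; exact hneg)
    have hmono : MonotoneOn (fun t => -g t) (Set.Icc a b) := by
      intro s hs t ht hst
      exact neg_le_neg (hanti.antitoneOn hs ht hst)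
    have hkey' : ∀ s ∈ Set.Icc a b, ∀ t ∈ Set.Icc a b, |f t - f s| ≤ K * |(-g t) - (-g s)| := by
      intro s hs t ht
      have : |(-g t) - (-g s)| = |g t - g s| := by rw [abs_sub_comm]; ring_nf
      rw [this]; exact hkey s hs t ht
    have H := aux_ostrowski a b x hab hx f (fun t => -g t) K hK0 hfc hgc.neg hmono hkey'
    simp only [intervalIntegral.integral_neg] at H
    calc |f x - (1 / (b - a)) * ∫ t in a..b, f t|
        ≤ (2 * ((x - (a + b) / 2) / (b - a)) * (-g x) +
          ((-∫ t in x..b, g t) - -∫ t in a..x, g t) / (b - a)) * K := H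
      _ = -(2 * ((x - (a + b) / 2) / (b - a)) * g x +
          ((∫ t in x..b, g t) - ∫ t in a..x, g t) / (b - a)) * K := by ring
      _ ≤ |2 * ((x - (a + b) / 2) / (b - a)) * g x +
          ((∫ t in x..b, g t) - ∫ t in a..x, g t) / (b - a)| * K :=
          mul_le_mul_of_nonneg_right (neg_le_abs _) hK0
  · -- g strictly monotone
    have hmono : MonotoneOn g (Set.Icc a b) :=
      (strictMonoOn_of_hasDerivWithinAt_pos (convex_Icc a b) hgc hderI
        (by rw [interior_Icc]; exact hpos)).monotoneOn
    have H := aux_ostrowski a b x hab hx f g K hK0 hfc hgc hmono hkey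
    exact H.trans (mul_le_mul_of_nonneg_right (le_abs_self _) hK0)
end

section
/- Let f, g : [a,b] → ℝ be continuous on [a,b] and differentiable on (a,b) with g'(t) ≠ 0 on (a,b), and |f'(t)/g'(t)| ≤ K on (a,b). Then |f((a+b)/2) - (1/(b-a))∫_a^b f(t) dt| ≤ (1/(b-a))|∫_{(a+b)/2}^b g(t) dt - ∫_a^{(a+b)/2} g(t) dt| · K. -/
/-!
By the Cauchy mean value theorem, `|f x - f y| ≤ K |g x - g y|` on `[a, b]`, so the deviation of
`f` from its mean at the midpoint `m` is at most `K / (b - a) * ∫ |g m - g t| dt`. Since `g'` never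
vanishes, `g` is strictly monotone by Darboux's theorem, and then `∫ |g m - g t| dt` splits at `m`
into `±(∫_m^b g - ∫_a^m g)`: the constant terms cancel because `m` is the midpoint.
-/

open Set intervalIntegral

section CauchyMeanValue

variable {a b K : ℝ} {f g f' g' : ℝ → ℝ}

theorem abs_sub_le_mul_abs_sub_of_abs_div_deriv_le
    (hfc : ContinuousOn f (Icc a b)) (hgc : ContinuousOn g (Icc a b))
    (hf' : ∀ t ∈ Ioo a b, HasDerivAt f (f' t) t) (hg' : ∀ t ∈ Ioo a b, HasDerivAt g (g' t) t)
    (hg0 : ∀ t ∈ Ioo a b, g' t ≠ 0) (hK : ∀ t ∈ Ioo a b, |f' t / g' t| ≤ K)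
    {x y : ℝ} (hx : x ∈ Icc a b) (hy : y ∈ Icc a b) :
    |f y - f x| ≤ K * |g y - g x| := by
  wlog hxy : x ≤ y generalizing x y
  · rw [abs_sub_comm (f y), abs_sub_comm (g y)]
    exact this hy hx (le_of_not_ge hxy)
  rcases hxy.eq_or_lt with rfl | hxy
  · simp
  have hIoo : Ioo x y ⊆ Ioo a b := Ioo_subset_Ioo hx.1 hy.2
  have hIcc : Icc x y ⊆ Icc a b := Icc_subset_Icc hx.1 hy.2
  obtain ⟨c, hc, hcauchy⟩ := exists_ratio_hasDerivAt_eq_ratio_slope f f' hxy (hfc.mono hIcc)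
    (fun t ht ↦ hf' t (hIoo ht)) g g' (hgc.mono hIcc) (fun t ht ↦ hg' t (hIoo ht))
  have hslope : f y - f x = (g y - g x) * (f' c / g' c) := by
    rw [mul_div_assoc', hcauchy, mul_div_cancel_right₀ _ (hg0 c (hIoo hc))]
  rw [hslope, abs_mul, mul_comm K]
  exact mul_le_mul_of_nonneg_left (hK c (hIoo hc)) (abs_nonneg _)

theorem strictMonoOn_or_strictAntiOn_of_hasDerivAt_ne_zero
    (hgc : ContinuousOn g (Icc a b)) (hg' : ∀ t ∈ Ioo a b, HasDerivAt g (g' t) t)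
    (hg0 : ∀ t ∈ Ioo a b, g' t ≠ 0) :
    StrictMonoOn g (Icc a b) ∨ StrictAntiOn g (Icc a b) := by
  have hg'Ioo : ∀ t ∈ interior (Icc a b), HasDerivWithinAt g (g' t) (interior (Icc a b)) t := by
    rw [interior_Icc]
    exact fun t ht ↦ (hg' t ht).hasDerivWithinAt
  rcases hasDerivWithinAt_forall_lt_or_forall_gt_of_forall_ne (convex_Ioo a b)
    (fun t ht ↦ (hg' t ht).hasDerivWithinAt) hg0 with hneg | hpos
  · exact Or.inr <| strictAntiOn_of_hasDerivWithinAt_neg (convex_Icc a b) hgc hg'Ioo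
      (by rwa [interior_Icc])
  · exact Or.inl <| strictMonoOn_of_hasDerivWithinAt_pos (convex_Icc a b) hgc hg'Ioo
      (by rwa [interior_Icc])

end CauchyMeanValue
section MidpointIntegral

variable {a b : ℝ} {g : ℝ → ℝ}

theorem integral_abs_sub_midpoint_of_monotoneOn (hab : a ≤ b) (hgc : ContinuousOn g (Icc a b))
    (hg : MonotoneOn g (Icc a b)) :
    ∫ t in a..b, |g ((a + b) / 2) - g t| =
      (∫ t in ((a + b) / 2)..b, g t) - ∫ t in a..(a + b) / 2, g t := by
  have ham : a ≤ (a + b) / 2 := by linarith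
  have hmb : (a + b) / 2 ≤ b := by linarith
  set m := (a + b) / 2
  have hm : m ∈ Icc a b := ⟨ham, hmb⟩
  have hint : ∀ {u v}, a ≤ u → u ≤ v → v ≤ b → IntervalIntegrable g MeasureTheory.volume u v :=
    fun hau huv hvb ↦ (hgc.mono (Icc_subset_Icc hau hvb)).intervalIntegrable_of_Icc huv
  have hint_abs : ∀ {u v}, a ≤ u → u ≤ v → v ≤ b →
      IntervalIntegrable (fun t ↦ |g m - g t|) MeasureTheory.volume u v :=
    fun hau huv hvb ↦ ((continuousOn_const.sub hgc).abs.mono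
      (Icc_subset_Icc hau hvb)).intervalIntegrable_of_Icc huv
  calc ∫ t in a..b, |g m - g t|
      = (∫ t in a..m, |g m - g t|) + ∫ t in m..b, |g m - g t| :=
        (integral_add_adjacent_intervals (hint_abs le_rfl ham hmb)
          (hint_abs ham hmb le_rfl)).symm
    _ = (∫ t in a..m, (g m - g t)) + ∫ t in m..b, (g t - g m) := by
        congr 1 <;> refine integral_congr fun t ht ↦ ?_
        · rw [uIcc_of_le ham] at ht
          exact abs_of_nonneg (sub_nonneg.2 (hg ⟨ht.1, ht.2.trans hmb⟩ hm ht.2))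
        · rw [uIcc_of_le hmb] at ht
          rw [abs_sub_comm]
          exact abs_of_nonneg (sub_nonneg.2 (hg hm ⟨ham.trans ht.1, ht.2⟩ ht.1))
    _ = (∫ t in m..b, g t) - ∫ t in a..m, g t := by
        rw [integral_sub intervalIntegrable_const (hint le_rfl ham hmb),
          integral_sub (hint ham hmb le_rfl) intervalIntegrable_const,
          integral_const, integral_const, smul_eq_mul, smul_eq_mul]
        ring

theorem integral_abs_sub_midpoint_eq_abs (hab : a ≤ b) (hgc : ContinuousOn g (Icc a b))
    (hg : MonotoneOn g (Icc a b) ∨ AntitoneOn g (Icc a b)) :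
    ∫ t in a..b, |g ((a + b) / 2) - g t| =
      |(∫ t in ((a + b) / 2)..b, g t) - ∫ t in a..(a + b) / 2, g t| := by
  rcases hg with hmono | hanti
  · rw [← integral_abs_sub_midpoint_of_monotoneOn hab hgc hmono,
      abs_of_nonneg (integral_nonneg hab fun _ _ ↦ abs_nonneg _)]
  · have hneg := integral_abs_sub_midpoint_of_monotoneOn hab hgc.neg hanti.neg
    simp only [Pi.neg_apply, neg_sub_neg, integral_neg] at hneg
    rw [abs_sub_comm, ← hneg, abs_of_nonneg (integral_nonneg hab fun _ _ ↦ abs_nonneg _)]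
    exact integral_congr fun _ _ ↦ abs_sub_comm _ _

end MidpointIntegral

theorem ostrowski_cauchy_midpoint (a b : ℝ) (hab : a < b) (f g f' g' : ℝ → ℝ) (K : ℝ)
    (hfc : ContinuousOn f (Set.Icc a b)) (hgc : ContinuousOn g (Set.Icc a b))
    (hf' : ∀ t ∈ Set.Ioo a b, HasDerivAt f (f' t) t)
    (hg' : ∀ t ∈ Set.Ioo a b, HasDerivAt g (g' t) t)
    (hg0 : ∀ t ∈ Set.Ioo a b, g' t ≠ 0)
    (hK : ∀ t ∈ Set.Ioo a b, |f' t / g' t| ≤ K) :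
    |f ((a + b) / 2) - (1 / (b - a)) * ∫ t in a..b, f t| ≤
      (1 / (b - a)) *
        |(∫ t in ((a + b) / 2)..b, g t) - ∫ t in a..(a + b) / 2, g t| * K := by
  have hm : (a + b) / 2 ∈ Icc a b := ⟨by linarith, by linarith⟩
  set m := (a + b) / 2
  have hmean : f m - (1 / (b - a)) * ∫ t in a..b, f t =
      (1 / (b - a)) * ∫ t in a..b, (f m - f t) := by
    have hba : b - a ≠ 0 := (sub_pos.2 hab).ne'
    rw [integral_sub intervalIntegrable_const (hfc.intervalIntegrable_of_Icc hab.le),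
      integral_const, smul_eq_mul]
    field_simp
  have hmonotone : MonotoneOn g (Icc a b) ∨ AntitoneOn g (Icc a b) :=
    (strictMonoOn_or_strictAntiOn_of_hasDerivAt_ne_zero hgc hg' hg0).imp
      StrictMonoOn.monotoneOn StrictAntiOn.antitoneOn
  rw [hmean, abs_mul, abs_of_pos (one_div_pos.2 (sub_pos.2 hab)), mul_assoc]
  gcongr
  calc |∫ t in a..b, (f m - f t)|
      ≤ ∫ t in a..b, |f m - f t| := abs_integral_le_integral_abs hab.le
    _ ≤ ∫ t in a..b, K * |g m - g t| := by
        refine integral_mono_on hab.le ?_ ?_ fun t ht ↦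
          abs_sub_le_mul_abs_sub_of_abs_div_deriv_le hfc hgc hf' hg' hg0 hK ht hm
        · exact ((continuousOn_const.sub hfc).abs).intervalIntegrable_of_Icc hab.le
        · exact ((continuousOn_const.sub hgc).abs.const_smul K).intervalIntegrable_of_Icc hab.le
    _ = |(∫ t in m..b, g t) - ∫ t in a..m, g t| * K := by
        rw [integral_const_mul, integral_abs_sub_midpoint_eq_abs hab.le hgc hmonotone, mul_comm]
end

section
/- Let f : [a,b] → ℝ with 0 < a < b be continuous on [a,b] and differentiable on (a,b), and suppose |t·f'(t)| ≤ P for all t ∈ (a,b). Then for any x ∈ (a,b): |f(x) - (1/(b-a))∫_a^b f(t) dt| ≤ (P/(b-a))·[ (b-x)ln I(x,b) - (x-a)ln I(a,x) + 2(x - (a+b)/2) ln x ], where ln I(u,v) = (v·ln v - u·ln u)/(v-u) - 1 is the logarithm of the identric mean. -/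
/-!
Since `|f'(t)| ≤ P / t`, both `P log - f` and `P log + f` are nondecreasing, so
`|f x - f t| ≤ P |log x - log t|` on `[a, b]`. Averaging over `t` bounds the left-hand side by
`P / (b - a) · ∫ₐᵇ |log x - log t| dt`, and this integral evaluates, via `∫ log = t log t - t`
on `[a, x]` and `[x, b]`, to the bracket on the right-hand side.
-/

open Real Set intervalIntegral
open MeasureTheory (volume ae_of_all)

theorem abs_sub_le_sub_of_abs_hasDerivAt_le {f g f' g' : ℝ → ℝ} {a b : ℝ}
    (hf : ContinuousOn f (Icc a b)) (hg : ContinuousOn g (Icc a b))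
    (hf' : ∀ t ∈ Ioo a b, HasDerivAt f (f' t) t) (hg' : ∀ t ∈ Ioo a b, HasDerivAt g (g' t) t)
    (hle : ∀ t ∈ Ioo a b, |f' t| ≤ g' t) {y z : ℝ} (hy : y ∈ Icc a b) (hz : z ∈ Icc a b)
    (hyz : y ≤ z) : |f z - f y| ≤ g z - g y := by
  have hmono : ∀ s : ℝ, |s| = 1 → MonotoneOn (fun t => g t - s * f t) (Icc a b) := by
    intro s hs
    refine monotoneOn_of_hasDerivWithinAt_nonneg (convex_Icc a b)
      (hg.sub (continuousOn_const.mul hf)) (f' := fun t => g' t - s * f' t) ?_ ?_ <;>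
      rw [interior_Icc] <;> intro t ht
    · exact (((hg' t ht).sub ((hf' t ht).const_mul s))).hasDerivWithinAt
    · have : |s * f' t| ≤ g' t := by rw [abs_mul, hs, one_mul]; exact hle t ht
      linarith [le_abs_self (s * f' t)]
  have hplus := hmono 1 abs_one hy hz hyz
  have hminus := hmono (-1) (by simp) hy hz hyz
  simp only at hplus hminus
  rw [abs_le]
  constructor <;> linarith

theorem abs_sub_le_mul_abs_log_sub {f f' : ℝ → ℝ} {a b P : ℝ} (ha : 0 < a)
    (hf : ContinuousOn f (Icc a b)) (hf' : ∀ t ∈ Ioo a b, HasDerivAt f (f' t) t)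
    (hP : ∀ t ∈ Ioo a b, |t * f' t| ≤ P) {y z : ℝ} (hy : y ∈ Icc a b) (hz : z ∈ Icc a b) :
    |f y - f z| ≤ P * |log y - log z| := by
  have hlog : ContinuousOn (fun t => P * log t) (Icc a b) :=
    continuousOn_const.mul (continuousOn_log.mono fun t ht => (ha.trans_le ht.1).ne')
  have hlog' : ∀ t ∈ Ioo a b, HasDerivAt (fun t => P * log t) (P * t⁻¹) t :=
    fun t ht => (hasDerivAt_log (ha.trans ht.1).ne').const_mul P
  have hle : ∀ t ∈ Ioo a b, |f' t| ≤ P * t⁻¹ := by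
    intro t ht
    have ht0 : 0 < t := ha.trans ht.1
    rw [← div_eq_mul_inv, le_div_iff₀ ht0, ← abs_of_pos ht0, ← abs_mul, mul_comm, abs_of_pos ht0]
    exact hP t ht
  rcases le_total y z with hyz | hzy
  · have := abs_sub_le_sub_of_abs_hasDerivAt_le hf hlog hf' hlog' hle hy hz hyz
    rw [abs_sub_comm, abs_sub_comm (log y),
      abs_of_nonneg (sub_nonneg.2 (log_le_log (ha.trans_le hy.1) hyz))]
    linarith
  · have := abs_sub_le_sub_of_abs_hasDerivAt_le hf hlog hf' hlog' hle hz hy hzy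
    rw [abs_of_nonneg (sub_nonneg.2 (log_le_log (ha.trans_le hz.1) hzy))]
    linarith

theorem abs_sub_interval_average_le {f h : ℝ → ℝ} {a b c : ℝ} (hab : a < b)
    (hf : IntervalIntegrable f volume a b) (hh : IntervalIntegrable h volume a b)
    (hbound : ∀ t ∈ Icc a b, |c - f t| ≤ h t) :
    |c - 1 / (b - a) * ∫ t in a..b, f t| ≤ 1 / (b - a) * ∫ t in a..b, h t := by
  have hba : 0 < b - a := sub_pos.2 hab
  have hmean : c - 1 / (b - a) * ∫ t in a..b, f t = 1 / (b - a) * ∫ t in a..b, (c - f t) := by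
    rw [integral_sub intervalIntegrable_const hf, integral_const, smul_eq_mul]
    field_simp
  rw [hmean, abs_mul, abs_of_pos (one_div_pos.2 hba)]
  gcongr
  exact norm_integral_le_of_norm_le (f := fun t => c - f t) hab.le
    (ae_of_all _ fun t ht => hbound t (Ioc_subset_Icc_self ht)) hh

theorem integral_abs_log_sub_log {a b x : ℝ} (ha : 0 < a) (hax : a ≤ x) (hxb : x ≤ b) :
    ∫ t in a..b, |log x - log t| =
      a * log a + b * log b - (a + b) * log x + 2 * x - a - b := by
  have hx : 0 < x := ha.trans_le hax
  have hleft : ∫ t in a..x, |log x - log t| = ∫ t in a..x, (log x - log t) :=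
    integral_congr fun t ht => by
      rw [uIcc_of_le hax] at ht
      exact abs_of_nonneg (sub_nonneg.2 (log_le_log (ha.trans_le ht.1) ht.2))
  have hright : ∫ t in x..b, |log x - log t| = ∫ t in x..b, (log t - log x) :=
    integral_congr fun t ht => by
      rw [uIcc_of_le hxb] at ht
      rw [abs_sub_comm]
      exact abs_of_nonneg (sub_nonneg.2 (log_le_log hx ht.1))
  have habsInt : ∀ u v : ℝ, IntervalIntegrable (fun t => |log x - log t|) volume u v :=
    fun u v => (intervalIntegrable_const.sub intervalIntegrable_log').abs
  rw [← integral_add_adjacent_intervals (habsInt a x) (habsInt x b), hleft, hright,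
    integral_sub intervalIntegrable_const intervalIntegrable_log',
    integral_sub intervalIntegrable_log' intervalIntegrable_const,
    integral_const, integral_const, integral_log, integral_log, smul_eq_mul, smul_eq_mul]
  ring

theorem ostrowski_identric (a b : ℝ) (ha : 0 < a) (hab : a < b) (f f' : ℝ → ℝ) (P : ℝ)
    (hfc : ContinuousOn f (Set.Icc a b))
    (hf' : ∀ t ∈ Set.Ioo a b, HasDerivAt f (f' t) t)
    (hP : ∀ t ∈ Set.Ioo a b, |t * f' t| ≤ P)
    (x : ℝ) (hx : x ∈ Set.Ioo a b) :
    |f x - (1 / (b - a)) * ∫ t in a..b, f t| ≤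
      (P / (b - a)) *
        ((b - x) * ((b * Real.log b - x * Real.log x) / (b - x) - 1) -
          (x - a) * ((x * Real.log x - a * Real.log a) / (x - a) - 1) +
          2 * (x - (a + b) / 2) * Real.log x) := by
  obtain ⟨hax, hxb⟩ := hx
  have hxI : x ∈ Icc a b := ⟨hax.le, hxb.le⟩
  have hfi : IntervalIntegrable f volume a b := hfc.intervalIntegrable_of_Icc hab.le
  have hlogi : IntervalIntegrable (fun t => P * |log x - log t|) volume a b :=
    (intervalIntegrable_const.sub intervalIntegrable_log').abs.const_mul P
  calc |f x - (1 / (b - a)) * ∫ t in a..b, f t|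
      ≤ 1 / (b - a) * ∫ t in a..b, P * |log x - log t| :=
        abs_sub_interval_average_le hab hfi hlogi fun t ht =>
          abs_sub_le_mul_abs_log_sub ha hfc hf' hP hxI ht
    _ = _ := by
        rw [integral_const_mul, integral_abs_log_sub_log ha hax.le hxb.le]
        have hbx : b - x ≠ 0 := (sub_pos.2 hxb).ne'
        have hxa : x - a ≠ 0 := (sub_pos.2 hax).ne'
        field_simp
        ring
end

section
/- Let f, g : [a,b] → ℝ be continuous on [a,b] and differentiable on (a,b)\{x} for some x ∈ (a,b), with g'(t) ≠ 0 for t ∈ (a,x) ∪ (x,b). Suppose |f'(t)/g'(t)| ≤ K₁ on (a,x) and |f'(t)/g'(t)| ≤ K₂ on (x,b). Then |f(x) - (1/(b-a))∫_a^b f(t) dt| ≤ (1/(b-a))|g(x)(x-a) - ∫_a^x g(t) dt|·K₁ + (1/(b-a))|g(x)(b-x) - ∫_x^b g(t) dt|·K₂. -/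
open Set intervalIntegral MeasureTheory

lemma key_right (u v : ℝ) (huv : u < v) (f g f' g' : ℝ → ℝ) (K : ℝ)
    (hfc : ContinuousOn f (Set.Icc u v)) (hgc : ContinuousOn g (Set.Icc u v))
    (hf' : ∀ t ∈ Set.Ioo u v, HasDerivAt f (f' t) t)
    (hg' : ∀ t ∈ Set.Ioo u v, HasDerivAt g (g' t) t)
    (hg0 : ∀ t ∈ Set.Ioo u v, g' t ≠ 0)
    (hK : ∀ t ∈ Set.Ioo u v, |f' t / g' t| ≤ K) :
    |f v * (v - u) - ∫ t in u..v, f t| ≤ K * |g v * (v - u) - ∫ t in u..v, g t| := by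
  have hI : Set.uIcc u v = Set.Icc u v := Set.uIcc_of_le huv.le
  -- step 1 : pointwise Cauchy MVT bound
  have step1 : ∀ t ∈ Set.Ico u v, |f v - f t| ≤ K * |g v - g t| := by
    intro t ht
    obtain ⟨c, hc, hcc⟩ := exists_ratio_hasDerivAt_eq_ratio_slope f f' ht.2
      (hfc.mono (Set.Icc_subset_Icc ht.1 le_rfl))
      (fun s hs => hf' s ⟨lt_of_le_of_lt ht.1 hs.1, hs.2⟩)
      g g' (hgc.mono (Set.Icc_subset_Icc ht.1 le_rfl))
      (fun s hs => hg' s ⟨lt_of_le_of_lt ht.1 hs.1, hs.2⟩)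
    have hcmem : c ∈ Set.Ioo u v := ⟨lt_of_le_of_lt ht.1 hc.1, hc.2⟩
    have hgc0 := hg0 c hcmem
    have h1 : f v - f t = (f' c / g' c) * (g v - g t) := by
      field_simp
      linarith [hcc]
    rw [h1, abs_mul]
    exact mul_le_mul_of_nonneg_right (hK c hcmem) (abs_nonneg _)
  -- nonvanishing of g v - g t
  have hne : ∀ t ∈ Set.Ico u v, g v - g t ≠ 0 := by
    intro t ht h0
    obtain ⟨c, hc, hc0⟩ := exists_hasDerivAt_eq_zero ht.2
      (hgc.mono (Set.Icc_subset_Icc ht.1 le_rfl)) (by linarith)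
      (fun s hs => hg' s ⟨lt_of_le_of_lt ht.1 hs.1, hs.2⟩)
    exact hg0 c ⟨lt_of_le_of_lt ht.1 hc.1, hc.2⟩ hc0
  have hψc : ContinuousOn (fun t => g v - g t) (Set.Icc u v) :=
    continuousOn_const.sub hgc
  set ε : ℝ := if 0 < g v - g u then 1 else -1 with hε
  have hεabs : |ε| = 1 := by rw [hε]; split <;> norm_num
  have hsign : ∀ t ∈ Set.Ico u v, 0 < ε * (g v - g t) := by
    intro t ht
    have huu : u ∈ Set.Ico u v := ⟨le_rfl, huv⟩
    by_cases h : 0 < g v - g u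
    · rw [hε, if_pos h, one_mul]
      rcases lt_or_ge 0 (g v - g t) with h' | h'
      · exact h'
      have h'' : g v - g t < 0 := lt_of_le_of_ne h' (hne t ht)
      have : (0:ℝ) ∈ Set.Icc (g v - g t) (g v - g u) := ⟨h''.le, h.le⟩
      obtain ⟨s, hs, hs0⟩ := intermediate_value_Icc' ht.1
        (hψc.mono (Set.Icc_subset_Icc le_rfl ht.2.le)) this
      exact absurd hs0 (hne s ⟨hs.1, lt_of_le_of_lt hs.2 ht.2⟩)
    · have h1 : g v - g u < 0 := lt_of_le_of_ne (not_lt.1 h) (hne u huu)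
      rw [hε, if_neg h, neg_one_mul]
      rcases lt_or_ge (g v - g t) 0 with h' | h'
      · linarith
      have h'' : 0 < g v - g t := lt_of_le_of_ne h' (Ne.symm (hne t ht))
      have : (0:ℝ) ∈ Set.Icc (g v - g u) (g v - g t) := ⟨h1.le, h''.le⟩
      obtain ⟨s, hs, hs0⟩ := intermediate_value_Icc ht.1
        (hψc.mono (Set.Icc_subset_Icc le_rfl ht.2.le)) this
      exact absurd hs0 (hne s ⟨hs.1, lt_of_le_of_lt hs.2 ht.2⟩)
  have step2 : ∀ t ∈ Set.Icc u v, |f v - f t| ≤ K * (ε * (g v - g t)) := by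
    intro t ht
    rcases eq_or_lt_of_le ht.2 with h | h
    · subst h; simp
    · have hp := hsign t ⟨ht.1, h⟩
      have habs : |g v - g t| = ε * (g v - g t) := by
        rw [← abs_of_pos hp, abs_mul, hεabs, one_mul]
      calc |f v - f t| ≤ K * |g v - g t| := step1 t ⟨ht.1, h⟩
        _ = K * (ε * (g v - g t)) := by rw [habs]
  -- integrability
  have hfint : IntervalIntegrable f volume u v := by
    apply ContinuousOn.intervalIntegrable; rwa [hI]
  have hgint : IntervalIntegrable g volume u v := by
    apply ContinuousOn.intervalIntegrable; rwa [hI]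
  have hφint : IntervalIntegrable (fun t => |f v - f t|) volume u v := by
    apply ContinuousOn.intervalIntegrable
    rw [hI]; exact (continuousOn_const.sub hfc).abs
  have hψint : IntervalIntegrable (fun t => K * (ε * (g v - g t))) volume u v := by
    apply ContinuousOn.intervalIntegrable
    rw [hI]; exact (continuousOn_const.mul (continuousOn_const.mul (continuousOn_const.sub hgc)))
  have hfe : (∫ t in u..v, (f v - f t)) = f v * (v - u) - ∫ t in u..v, f t := by
    rw [intervalIntegral.integral_sub intervalIntegrable_const hfint,
      intervalIntegral.integral_const, smul_eq_mul, mul_comm]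
  have hge : (∫ t in u..v, (g v - g t)) = g v * (v - u) - ∫ t in u..v, g t := by
    rw [intervalIntegral.integral_sub intervalIntegrable_const hgint,
      intervalIntegral.integral_const, smul_eq_mul, mul_comm]
  have hψnn : 0 ≤ ε * ∫ t in u..v, (g v - g t) := by
    rw [← intervalIntegral.integral_const_mul]
    apply intervalIntegral.integral_nonneg huv.le
    intro t ht
    rcases eq_or_lt_of_le ht.2 with h | h
    · subst h; simp
    · exact (hsign t ⟨ht.1, h⟩).le
  have habsψ : |g v * (v - u) - ∫ t in u..v, g t| = ε * ∫ t in u..v, (g v - g t) := by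
    rw [← hge, ← abs_of_nonneg hψnn, abs_mul, hεabs, one_mul]
  rw [← hfe, habsψ]
  calc |∫ t in u..v, (f v - f t)| ≤ ∫ t in u..v, |f v - f t| :=
        intervalIntegral.abs_integral_le_integral_abs huv.le
    _ ≤ ∫ t in u..v, K * (ε * (g v - g t)) := by
        apply intervalIntegral.integral_mono_on huv.le hφint hψint step2
    _ = K * (ε * ∫ t in u..v, (g v - g t)) := by
        rw [← intervalIntegral.integral_const_mul, ← intervalIntegral.integral_const_mul]


lemma key_left (u v : ℝ) (huv : u < v) (f g f' g' : ℝ → ℝ) (K : ℝ)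
    (hfc : ContinuousOn f (Set.Icc u v)) (hgc : ContinuousOn g (Set.Icc u v))
    (hf' : ∀ t ∈ Set.Ioo u v, HasDerivAt f (f' t) t)
    (hg' : ∀ t ∈ Set.Ioo u v, HasDerivAt g (g' t) t)
    (hg0 : ∀ t ∈ Set.Ioo u v, g' t ≠ 0)
    (hK : ∀ t ∈ Set.Ioo u v, |f' t / g' t| ≤ K) :
    |f u * (v - u) - ∫ t in u..v, f t| ≤ K * |g u * (v - u) - ∫ t in u..v, g t| := by
  have hI : Set.uIcc u v = Set.Icc u v := Set.uIcc_of_le huv.le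
  have step1 : ∀ t ∈ Set.Ioc u v, |f u - f t| ≤ K * |g u - g t| := by
    intro t ht
    obtain ⟨c, hc, hcc⟩ := exists_ratio_hasDerivAt_eq_ratio_slope f f' ht.1
      (hfc.mono (Set.Icc_subset_Icc le_rfl ht.2))
      (fun s hs => hf' s ⟨hs.1, lt_of_lt_of_le hs.2 ht.2⟩)
      g g' (hgc.mono (Set.Icc_subset_Icc le_rfl ht.2))
      (fun s hs => hg' s ⟨hs.1, lt_of_lt_of_le hs.2 ht.2⟩)
    have hcmem : c ∈ Set.Ioo u v := ⟨hc.1, lt_of_lt_of_le hc.2 ht.2⟩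
    have hgc0 := hg0 c hcmem
    have h1 : f u - f t = (f' c / g' c) * (g u - g t) := by
      field_simp
      linarith [hcc]
    rw [h1, abs_mul]
    exact mul_le_mul_of_nonneg_right (hK c hcmem) (abs_nonneg _)
  have hne : ∀ t ∈ Set.Ioc u v, g u - g t ≠ 0 := by
    intro t ht h0
    obtain ⟨c, hc, hc0⟩ := exists_hasDerivAt_eq_zero ht.1
      (hgc.mono (Set.Icc_subset_Icc le_rfl ht.2)) (by linarith)
      (fun s hs => hg' s ⟨hs.1, lt_of_lt_of_le hs.2 ht.2⟩)
    exact hg0 c ⟨hc.1, lt_of_lt_of_le hc.2 ht.2⟩ hc0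
  have hψc : ContinuousOn (fun t => g u - g t) (Set.Icc u v) :=
    continuousOn_const.sub hgc
  set ε : ℝ := if 0 < g u - g v then 1 else -1 with hε
  have hεabs : |ε| = 1 := by rw [hε]; split <;> norm_num
  have hsign : ∀ t ∈ Set.Ioc u v, 0 < ε * (g u - g t) := by
    intro t ht
    have hvv : v ∈ Set.Ioc u v := ⟨huv, le_rfl⟩
    by_cases h : 0 < g u - g v
    · rw [hε, if_pos h, one_mul]
      rcases lt_or_ge 0 (g u - g t) with h' | h'
      · exact h'
      have h'' : g u - g t < 0 := lt_of_le_of_ne h' (hne t ht)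
      have : (0:ℝ) ∈ Set.Icc (g u - g t) (g u - g v) := ⟨h''.le, h.le⟩
      obtain ⟨s, hs, hs0⟩ := intermediate_value_Icc ht.2
        (hψc.mono (Set.Icc_subset_Icc ht.1.le le_rfl)) this
      exact absurd hs0 (hne s ⟨lt_of_lt_of_le ht.1 hs.1, hs.2⟩)
    · have h1 : g u - g v < 0 := lt_of_le_of_ne (not_lt.1 h) (hne v hvv)
      rw [hε, if_neg h, neg_one_mul]
      rcases lt_or_ge (g u - g t) 0 with h' | h'
      · linarith
      have h'' : 0 < g u - g t := lt_of_le_of_ne h' (Ne.symm (hne t ht))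
      have : (0:ℝ) ∈ Set.Icc (g u - g v) (g u - g t) := ⟨h1.le, h''.le⟩
      obtain ⟨s, hs, hs0⟩ := intermediate_value_Icc' ht.2
        (hψc.mono (Set.Icc_subset_Icc ht.1.le le_rfl)) this
      exact absurd hs0 (hne s ⟨lt_of_lt_of_le ht.1 hs.1, hs.2⟩)
  have step2 : ∀ t ∈ Set.Icc u v, |f u - f t| ≤ K * (ε * (g u - g t)) := by
    intro t ht
    rcases eq_or_lt_of_le ht.1 with h | h
    · rw [← h]; simp
    · have hp := hsign t ⟨h, ht.2⟩
      have habs : |g u - g t| = ε * (g u - g t) := by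
        rw [← abs_of_pos hp, abs_mul, hεabs, one_mul]
      calc |f u - f t| ≤ K * |g u - g t| := step1 t ⟨h, ht.2⟩
        _ = K * (ε * (g u - g t)) := by rw [habs]
  have hfint : IntervalIntegrable f MeasureTheory.volume u v := by
    apply ContinuousOn.intervalIntegrable; rwa [hI]
  have hgint : IntervalIntegrable g MeasureTheory.volume u v := by
    apply ContinuousOn.intervalIntegrable; rwa [hI]
  have hφint : IntervalIntegrable (fun t => |f u - f t|) MeasureTheory.volume u v := by
    apply ContinuousOn.intervalIntegrable
    rw [hI]; exact (continuousOn_const.sub hfc).abs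
  have hψint : IntervalIntegrable (fun t => K * (ε * (g u - g t))) MeasureTheory.volume u v := by
    apply ContinuousOn.intervalIntegrable
    rw [hI]; exact (continuousOn_const.mul (continuousOn_const.mul (continuousOn_const.sub hgc)))
  have hfe : (∫ t in u..v, (f u - f t)) = f u * (v - u) - ∫ t in u..v, f t := by
    rw [intervalIntegral.integral_sub intervalIntegrable_const hfint,
      intervalIntegral.integral_const, smul_eq_mul, mul_comm]
  have hge : (∫ t in u..v, (g u - g t)) = g u * (v - u) - ∫ t in u..v, g t := by
    rw [intervalIntegral.integral_sub intervalIntegrable_const hgint,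
      intervalIntegral.integral_const, smul_eq_mul, mul_comm]
  have hψnn : 0 ≤ ε * ∫ t in u..v, (g u - g t) := by
    rw [← intervalIntegral.integral_const_mul]
    apply intervalIntegral.integral_nonneg huv.le
    intro t ht
    rcases eq_or_lt_of_le ht.1 with h | h
    · rw [← h]; simp
    · exact (hsign t ⟨h, ht.2⟩).le
  have habsψ : |g u * (v - u) - ∫ t in u..v, g t| = ε * ∫ t in u..v, (g u - g t) := by
    rw [← hge, ← abs_of_nonneg hψnn, abs_mul, hεabs, one_mul]
  rw [← hfe, habsψ]
  calc |∫ t in u..v, (f u - f t)| ≤ ∫ t in u..v, |f u - f t| :=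
        intervalIntegral.abs_integral_le_integral_abs huv.le
    _ ≤ ∫ t in u..v, K * (ε * (g u - g t)) := by
        apply intervalIntegral.integral_mono_on huv.le hφint hψint step2
    _ = K * (ε * ∫ t in u..v, (g u - g t)) := by
        rw [← intervalIntegral.integral_const_mul, ← intervalIntegral.integral_const_mul]

theorem ostrowski_cauchy_split (a b x : ℝ) (hab : a < b) (hx : x ∈ Set.Ioo a b)
    (f g f' g' : ℝ → ℝ) (K₁ K₂ : ℝ)
    (hfc : ContinuousOn f (Set.Icc a b)) (hgc : ContinuousOn g (Set.Icc a b))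
    (hf' : ∀ t ∈ Set.Ioo a b \ {x}, HasDerivAt f (f' t) t)
    (hg' : ∀ t ∈ Set.Ioo a b \ {x}, HasDerivAt g (g' t) t)
    (hg0 : ∀ t ∈ Set.Ioo a b \ {x}, g' t ≠ 0)
    (hK₁ : ∀ t ∈ Set.Ioo a x, |f' t / g' t| ≤ K₁)
    (hK₂ : ∀ t ∈ Set.Ioo x b, |f' t / g' t| ≤ K₂) :
    |f x - (1 / (b - a)) * ∫ t in a..b, f t| ≤
      (1 / (b - a)) * |g x * (x - a) - ∫ t in a..x, g t| * K₁ +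
      (1 / (b - a)) * |g x * (b - x) - ∫ t in x..b, g t| * K₂ := by
  obtain ⟨hax, hxb⟩ := hx
  have hba : (0:ℝ) < 1 / (b - a) := by
    apply one_div_pos.2; linarith
  have hmem1 : ∀ t ∈ Set.Ioo a x, t ∈ Set.Ioo a b \ {x} := fun t ht =>
    ⟨⟨ht.1, ht.2.trans hxb⟩, by simpa using ne_of_lt ht.2⟩
  have hmem2 : ∀ t ∈ Set.Ioo x b, t ∈ Set.Ioo a b \ {x} := fun t ht =>
    ⟨⟨hax.trans ht.1, ht.2⟩, by simpa using ne_of_gt ht.1⟩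
  have h1 := key_right a x hax f g f' g' K₁
    (hfc.mono (Set.Icc_subset_Icc le_rfl hxb.le))
    (hgc.mono (Set.Icc_subset_Icc le_rfl hxb.le))
    (fun t ht => hf' t (hmem1 t ht)) (fun t ht => hg' t (hmem1 t ht))
    (fun t ht => hg0 t (hmem1 t ht)) hK₁
  have h2 := key_left x b hxb f g f' g' K₂
    (hfc.mono (Set.Icc_subset_Icc hax.le le_rfl))
    (hgc.mono (Set.Icc_subset_Icc hax.le le_rfl))
    (fun t ht => hf' t (hmem2 t ht)) (fun t ht => hg' t (hmem2 t ht))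
    (fun t ht => hg0 t (hmem2 t ht)) hK₂
  have hfint1 : IntervalIntegrable f MeasureTheory.volume a x := by
    apply ContinuousOn.intervalIntegrable
    rw [Set.uIcc_of_le hax.le]
    exact hfc.mono (Set.Icc_subset_Icc le_rfl hxb.le)
  have hfint2 : IntervalIntegrable f MeasureTheory.volume x b := by
    apply ContinuousOn.intervalIntegrable
    rw [Set.uIcc_of_le hxb.le]
    exact hfc.mono (Set.Icc_subset_Icc hax.le le_rfl)
  have hsplit : (∫ t in a..x, f t) + (∫ t in x..b, f t) = ∫ t in a..b, f t :=
    intervalIntegral.integral_add_adjacent_intervals hfint1 hfint2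
  have e1 : f x - (1 / (b - a)) * ∫ t in a..b, f t =
      (1 / (b - a)) * ((f x * (x - a) - ∫ t in a..x, f t) +
        (f x * (b - x) - ∫ t in x..b, f t)) := by
    rw [← hsplit]
    have : b - a ≠ 0 := by linarith
    field_simp
    ring
  rw [e1, abs_mul, abs_of_pos hba]
  calc (1 / (b - a)) * |(f x * (x - a) - ∫ t in a..x, f t) +
        (f x * (b - x) - ∫ t in x..b, f t)| ≤
      (1 / (b - a)) * (K₁ * |g x * (x - a) - ∫ t in a..x, g t| +
        K₂ * |g x * (b - x) - ∫ t in x..b, g t|) := by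
        apply mul_le_mul_of_nonneg_left _ hba.le
        exact le_trans (abs_add_le _ _) (add_le_add h1 h2)
    _ = (1 / (b - a)) * |g x * (x - a) - ∫ t in a..x, g t| * K₁ +
        (1 / (b - a)) * |g x * (b - x) - ∫ t in x..b, g t| * K₂ := by ring
end

section
/- Let 0 < a < b, p ∈ ℝ\{0,-1}, A = (a+b)/2, and let f : [a,b] → ℝ be continuous on [a,b] and differentiable on (a,b)\{A}. If |f'(t)/(p t^{p-1})| ≤ M₁ for t ∈ (a,A) and |f'(t)/(p t^{p-1})| ≤ M₂ for t ∈ (A,b), then |f(A) - (1/(b-a))∫_a^b f(t) dt| ≤ (M₁/(b-a))·|A^p·(A-a) - (A^{p+1}-a^{p+1})/(p+1)| + (M₂/(b-a))·|A^p·(b-A) - (b^{p+1}-A^{p+1})/(p+1)|. -/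
open Set intervalIntegral MeasureTheory



lemma ostrowski_key (p M σ c d : ℝ) (h0 : 0 < c) (hcd : c ≤ d)
    (hσp : σ * p = |p|)
    (f f' : ℝ → ℝ) (hc : ContinuousOn f (Set.Icc c d))
    (hd : ∀ s ∈ Set.Ioo c d, HasDerivAt f (f' s) s)
    (hbound : ∀ s ∈ Set.Ioo c d, |f' s| ≤ M * |p| * s ^ (p - 1)) :
    |f d - f c| ≤ M * σ * (d ^ p - c ^ p) := by
  have hB : ∀ s ∈ Set.Ioo c d,
      HasDerivAt (fun s : ℝ => M * σ * s ^ p) (M * |p| * s ^ (p - 1)) s := by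
    intro s hs
    have h1 : (0:ℝ) < s := lt_of_lt_of_le h0 hs.1.le
    have := (Real.hasDerivAt_rpow_const (x := s) (p := p) (Or.inl h1.ne')).const_mul (M * σ)
    refine this.congr_deriv ?_
    rw [← hσp]; ring
  have hBc : ContinuousOn (fun s : ℝ => M * σ * s ^ p) (Set.Icc c d) := by
    refine continuousOn_const.mul fun s hs => ?_
    exact (Real.continuousAt_rpow_const s p (Or.inl (lt_of_lt_of_le h0 hs.1).ne')).continuousWithinAt
  have mono : ∀ (g g' : ℝ → ℝ), ContinuousOn g (Set.Icc c d) →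
      (∀ s ∈ Set.Ioo c d, HasDerivAt g (g' s) s) →
      (∀ s ∈ Set.Ioo c d, 0 ≤ g' s) → g c ≤ g d := by
    intro g g' hgc hgd hnn
    have := monotoneOn_of_deriv_nonneg (convex_Icc c d) hgc ?_ ?_
    · exact this (Set.left_mem_Icc.2 hcd) (Set.right_mem_Icc.2 hcd) hcd
    · rw [interior_Icc]
      exact fun x hx => (hgd x hx).differentiableAt.differentiableWithinAt
    · rw [interior_Icc]
      intro x hx
      rw [(hgd x hx).deriv]; exact hnn x hx
  have h1 := mono (fun s => M * σ * s ^ p - f s) (fun s => M * |p| * s ^ (p - 1) - f' s)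
      (hBc.sub hc) (fun s hs => (hB s hs).sub (hd s hs))
      (fun s hs => sub_nonneg.2 ((le_abs_self _).trans (hbound s hs)))
  have h2 := mono (fun s => M * σ * s ^ p + f s) (fun s => M * |p| * s ^ (p - 1) + f' s)
      (hBc.add hc) (fun s hs => (hB s hs).add (hd s hs))
      (fun s hs => by nlinarith [hbound s hs, neg_abs_le (f' s)])
  rw [abs_le]
  constructor <;> nlinarith

theorem ostrowski_power_midpoint (a b p : ℝ) (ha : 0 < a) (hab : a < b)
    (hp0 : p ≠ 0) (hp1 : p ≠ -1) (f f' : ℝ → ℝ) (M₁ M₂ : ℝ)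
    (hfc : ContinuousOn f (Set.Icc a b))
    (hf' : ∀ t ∈ Set.Ioo a b \ {(a + b) / 2}, HasDerivAt f (f' t) t)
    (hM₁ : ∀ t ∈ Set.Ioo a ((a + b) / 2), |f' t / (p * t ^ (p - 1))| ≤ M₁)
    (hM₂ : ∀ t ∈ Set.Ioo ((a + b) / 2) b, |f' t / (p * t ^ (p - 1))| ≤ M₂) :
    |f ((a + b) / 2) - (1 / (b - a)) * ∫ t in a..b, f t| ≤
      (M₁ / (b - a)) * |((a + b) / 2) ^ p * ((a + b) / 2 - a) -
        (((a + b) / 2) ^ (p + 1) - a ^ (p + 1)) / (p + 1)| +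
      (M₂ / (b - a)) * |((a + b) / 2) ^ p * (b - (a + b) / 2) -
        (b ^ (p + 1) - ((a + b) / 2) ^ (p + 1)) / (p + 1)| := by
  set A : ℝ := (a + b) / 2 with hAdef
  have haA : a < A := by rw [hAdef]; linarith
  have hAb : A < b := by rw [hAdef]; linarith
  have hA0 : 0 < A := ha.trans haA
  set σ : ℝ := if 0 ≤ p then 1 else -1 with hσdef
  have hσp : σ * p = |p| := by
    rw [hσdef]; split_ifs with h
    · simp [abs_of_nonneg h]
    · push_neg at h; rw [abs_of_neg h]; ring
  have hσsign : ∀ x y : ℝ, 0 < x → x ≤ y → 0 ≤ σ * (y ^ p - x ^ p) := by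
    intro x y hx hxy
    rw [hσdef]; split_ifs with h
    · have := Real.rpow_le_rpow hx.le hxy h
      linarith
    · push_neg at h
      have := Real.rpow_le_rpow_of_nonpos hx hxy h.le
      linarith
  have hbd : ∀ (M : ℝ) (s : ℝ), 0 < s → |f' s / (p * s ^ (p - 1))| ≤ M →
      |f' s| ≤ M * |p| * s ^ (p - 1) := by
    intro M s hs0 h
    have hpow : (0:ℝ) < s ^ (p - 1) := Real.rpow_pos_of_pos hs0 _
    rw [abs_div] at h
    have hd0 : (0:ℝ) < |p * s ^ (p - 1)| := abs_pos.2 (mul_ne_zero hp0 hpow.ne')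
    rw [div_le_iff₀ hd0] at h
    calc |f' s| ≤ M * |p * s ^ (p - 1)| := h
      _ = M * |p| * s ^ (p - 1) := by rw [abs_mul, abs_of_pos hpow]; ring
  have key1 : ∀ t ∈ Set.Icc a A, |f A - f t| ≤ M₁ * σ * (A ^ p - t ^ p) := by
    intro t ht
    refine ostrowski_key p M₁ σ t A (ha.trans_le ht.1) ht.2 hσp f f'
      (hfc.mono (Icc_subset_Icc ht.1 hAb.le)) (fun s hs => ?_) (fun s hs => ?_)
    · exact hf' s ⟨⟨lt_of_le_of_lt ht.1 hs.1, hs.2.trans hAb⟩, (by exact hs.2.ne : s ≠ A)⟩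
    · exact hbd M₁ s (ha.trans (lt_of_le_of_lt ht.1 hs.1))
        (hM₁ s ⟨lt_of_le_of_lt ht.1 hs.1, hs.2⟩)
  have key2 : ∀ t ∈ Set.Icc A b, |f t - f A| ≤ M₂ * σ * (t ^ p - A ^ p) := by
    intro t ht
    refine ostrowski_key p M₂ σ A t hA0 ht.1 hσp f f'
      (hfc.mono (Icc_subset_Icc haA.le ht.2)) (fun s hs => ?_) (fun s hs => ?_)
    · exact hf' s ⟨⟨haA.trans hs.1, lt_of_lt_of_le hs.2 ht.2⟩, (by exact hs.1.ne' : s ≠ A)⟩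
    · exact hbd M₂ s (hA0.trans hs.1) (hM₂ s ⟨hs.1, lt_of_lt_of_le hs.2 ht.2⟩)
  have hcont_rpow : ∀ {c d : ℝ}, 0 < c → c ≤ d →
      ContinuousOn (fun t : ℝ => t ^ p) (Set.uIcc c d) := by
    intro c d hc hcd
    rw [Set.uIcc_of_le hcd]
    exact fun s hs =>
      (Real.continuousAt_rpow_const s p (Or.inl (hc.trans_le hs.1).ne')).continuousWithinAt
  have hint_rpow_aA : IntervalIntegrable (fun t : ℝ => t ^ p) volume a A :=
    (hcont_rpow ha haA.le).intervalIntegrable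
  have hint_rpow_Ab : IntervalIntegrable (fun t : ℝ => t ^ p) volume A b :=
    (hcont_rpow hA0 hAb.le).intervalIntegrable
  have hfcaA : ContinuousOn f (Set.uIcc a A) := by
    rw [Set.uIcc_of_le haA.le]; exact hfc.mono (Icc_subset_Icc le_rfl hAb.le)
  have hfcAb : ContinuousOn f (Set.uIcc A b) := by
    rw [Set.uIcc_of_le hAb.le]; exact hfc.mono (Icc_subset_Icc haA.le le_rfl)
  have hint_f : IntervalIntegrable f volume a b := by
    apply ContinuousOn.intervalIntegrable; rwa [Set.uIcc_of_le hab.le]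
  have hint1 : IntervalIntegrable (fun t => f A - f t) volume a A :=
    (continuousOn_const.sub hfcaA).intervalIntegrable
  have hint2 : IntervalIntegrable (fun t => f A - f t) volume A b :=
    (continuousOn_const.sub hfcAb).intervalIntegrable
  have hval1 : (∫ t in a..A, t ^ p) = (A ^ (p + 1) - a ^ (p + 1)) / (p + 1) :=
    integral_rpow (Or.inr ⟨hp1, Set.notMem_uIcc_of_lt ha hA0⟩)
  have hval2 : (∫ t in A..b, t ^ p) = (b ^ (p + 1) - A ^ (p + 1)) / (p + 1) :=
    integral_rpow (Or.inr ⟨hp1, Set.notMem_uIcc_of_lt hA0 (ha.trans hab)⟩)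
  set X₁ : ℝ := A ^ p * (A - a) - (A ^ (p + 1) - a ^ (p + 1)) / (p + 1) with hX₁
  set Y₂ : ℝ := (b ^ (p + 1) - A ^ (p + 1)) / (p + 1) - A ^ p * (b - A) with hY₂
  have hbE1 : |∫ t in a..A, (f A - f t)| ≤ M₁ * σ * X₁ := by
    have h1 : |∫ t in a..A, (f A - f t)| ≤ ∫ t in a..A, |f A - f t| :=
      intervalIntegral.abs_integral_le_integral_abs haA.le
    have h2 : (∫ t in a..A, |f A - f t|) ≤ ∫ t in a..A, M₁ * σ * (A ^ p - t ^ p) := by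
      apply intervalIntegral.integral_mono_on haA.le
      · exact (continuousOn_const.sub hfcaA).abs.intervalIntegrable
      · exact (continuousOn_const.mul
          (continuousOn_const.sub (hcont_rpow ha haA.le))).intervalIntegrable
      · exact key1
    have h3 : (∫ t in a..A, M₁ * σ * (A ^ p - t ^ p)) = M₁ * σ * X₁ := by
      rw [intervalIntegral.integral_const_mul,
        intervalIntegral.integral_sub intervalIntegrable_const hint_rpow_aA,
        intervalIntegral.integral_const, hval1, hX₁, smul_eq_mul]
      ring
    linarith [h1.trans (h2.trans_eq h3)]
  have hbE2 : |∫ t in A..b, (f A - f t)| ≤ M₂ * σ * Y₂ := by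
    have hneg : (∫ t in A..b, (f A - f t)) = -∫ t in A..b, (f t - f A) := by
      rw [← intervalIntegral.integral_neg]; congr 1; ext t; ring
    rw [hneg, abs_neg]
    have h1 : |∫ t in A..b, (f t - f A)| ≤ ∫ t in A..b, |f t - f A| :=
      intervalIntegral.abs_integral_le_integral_abs hAb.le
    have h2 : (∫ t in A..b, |f t - f A|) ≤ ∫ t in A..b, M₂ * σ * (t ^ p - A ^ p) := by
      apply intervalIntegral.integral_mono_on hAb.le
      · exact ((hfcAb.sub continuousOn_const)).abs.intervalIntegrable
      · exact (continuousOn_const.mul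
          ((hcont_rpow hA0 hAb.le).sub continuousOn_const)).intervalIntegrable
      · exact key2
    have h3 : (∫ t in A..b, M₂ * σ * (t ^ p - A ^ p)) = M₂ * σ * Y₂ := by
      rw [intervalIntegral.integral_const_mul,
        intervalIntegral.integral_sub hint_rpow_Ab intervalIntegrable_const,
        intervalIntegral.integral_const, hval2, hY₂, smul_eq_mul]
      ring
    linarith [h1.trans (h2.trans_eq h3)]
  have hσabs : |σ| = 1 := by rw [hσdef]; split_ifs <;> simp
  have hσX₁ : σ * X₁ = |X₁| := by
    have hXval : X₁ = ∫ t in a..A, (A ^ p - t ^ p) := by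
      rw [intervalIntegral.integral_sub intervalIntegrable_const hint_rpow_aA,
        intervalIntegral.integral_const, hval1, hX₁, smul_eq_mul]
      ring
    have hnn : 0 ≤ σ * X₁ := by
      rw [hXval, ← intervalIntegral.integral_const_mul]
      apply intervalIntegral.integral_nonneg haA.le
      intro t ht
      exact hσsign t A (ha.trans_le ht.1) ht.2
    calc σ * X₁ = |σ * X₁| := (abs_of_nonneg hnn).symm
      _ = |σ| * |X₁| := abs_mul _ _
      _ = |X₁| := by rw [hσabs, one_mul]
  have hσY₂ : σ * Y₂ = |Y₂| := by
    have hYval : Y₂ = ∫ t in A..b, (t ^ p - A ^ p) := by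
      rw [intervalIntegral.integral_sub hint_rpow_Ab intervalIntegrable_const,
        intervalIntegral.integral_const, hval2, hY₂, smul_eq_mul]
      ring
    have hnn : 0 ≤ σ * Y₂ := by
      rw [hYval, ← intervalIntegral.integral_const_mul]
      apply intervalIntegral.integral_nonneg hAb.le
      intro t ht
      exact hσsign A t hA0 ht.1
    calc σ * Y₂ = |σ * Y₂| := (abs_of_nonneg hnn).symm
      _ = |σ| * |Y₂| := abs_mul _ _
      _ = |Y₂| := by rw [hσabs, one_mul]
  have hYX : |Y₂| = |A ^ p * (b - A) - (b ^ (p + 1) - A ^ (p + 1)) / (p + 1)| := by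
    rw [hY₂, abs_sub_comm]
  have hsplit : (∫ t in a..b, (f A - f t)) =
      (∫ t in a..A, (f A - f t)) + ∫ t in A..b, (f A - f t) :=
    (intervalIntegral.integral_add_adjacent_intervals hint1 hint2).symm
  have htotal : (∫ t in a..b, (f A - f t)) = (b - a) * f A - ∫ t in a..b, f t := by
    rw [intervalIntegral.integral_sub intervalIntegrable_const hint_f,
      intervalIntegral.integral_const, smul_eq_mul]
  have hba : (0:ℝ) < b - a := by linarith
  have hLHS : f A - (1 / (b - a)) * ∫ t in a..b, f t =
      (1 / (b - a)) * ((b - a) * f A - ∫ t in a..b, f t) := by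
    field_simp
  rw [hLHS, ← htotal, abs_mul, abs_of_pos (by positivity : (0:ℝ) < 1 / (b - a)), hsplit, ← hYX]
  have hsum : |(∫ t in a..A, (f A - f t)) + ∫ t in A..b, (f A - f t)| ≤
      M₁ * |X₁| + M₂ * |Y₂| := by
    calc |(∫ t in a..A, (f A - f t)) + ∫ t in A..b, (f A - f t)|
        ≤ |∫ t in a..A, (f A - f t)| + |∫ t in A..b, (f A - f t)| := abs_add_le _ _
      _ ≤ M₁ * σ * X₁ + M₂ * σ * Y₂ := add_le_add hbE1 hbE2
      _ = M₁ * (σ * X₁) + M₂ * (σ * Y₂) := by ring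
      _ = M₁ * |X₁| + M₂ * |Y₂| := by rw [hσX₁, hσY₂]
  calc (1 / (b - a)) * |(∫ t in a..A, (f A - f t)) + ∫ t in A..b, (f A - f t)|
      ≤ (1 / (b - a)) * (M₁ * |X₁| + M₂ * |Y₂|) := by
        apply mul_le_mul_of_nonneg_left hsum (by positivity)
    _ = (M₁ / (b - a)) * |X₁| + (M₂ / (b - a)) * |Y₂| := by ring
end

section
/- Let 0 < a < b, A = (a+b)/2, and f : [a,b] → ℝ continuous on [a,b], differentiable on (a,A) ∪ (A,b), with |f'(t)| ≤ M₁/t for t ∈ (a,A) and |f'(t)| ≤ M₂/t for t ∈ (A,b). Then |f(A) - (1/(b-a))∫_a^b f(t) dt| ≤ (M₁/2)·(ln A - (2/(b-a))∫_a^A ln t dt) + (M₂/2)·((2/(b-a))∫_A^b ln t dt - ln A), equivalently ≤ (1/2)[M₁ ln(A/I(a,A)) + M₂ ln(I(A,b)/A)] where ln I(u,v) = (v ln v - u ln u)/(v-u) - 1. -/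
open Real Set intervalIntegral

lemma log_bound_aux (M c d : ℝ) (hc : 0 < c) (g g' : ℝ → ℝ)
    (hgc : ContinuousOn g (Set.Icc c d))
    (hg' : ∀ t ∈ Set.Ioo c d, HasDerivAt g (g' t) t)
    (hb : ∀ t ∈ Set.Ioo c d, |g' t| ≤ M / t) :
    ∀ t ∈ Set.Icc c d, ∀ s ∈ Set.Icc c d, t ≤ s →
      |g s - g t| ≤ M * (Real.log s - Real.log t) := by
  have hlogc : ContinuousOn (fun x : ℝ => M * Real.log x) (Set.Icc c d) :=
    continuousOn_const.mul (Real.continuousOn_log.mono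
      (fun x hx => ne_of_gt (lt_of_lt_of_le hc hx.1)))
  have hder : ∀ x ∈ Set.Ioo c d, HasDerivAt (fun x : ℝ => M * Real.log x) (M / x) x := by
    intro x hx
    have hx0 : x ≠ 0 := ne_of_gt (hc.trans hx.1)
    have := (Real.hasDerivAt_log hx0).const_mul M
    simpa [div_eq_mul_inv] using this
  have mono_aux : ∀ (h h' : ℝ → ℝ), ContinuousOn h (Set.Icc c d) →
      (∀ x ∈ Set.Ioo c d, HasDerivAt h (h' x) x) →
      (∀ x ∈ Set.Ioo c d, 0 ≤ h' x) → MonotoneOn h (Set.Icc c d) := by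
    intro h h' hcont hderiv hpos
    apply monotoneOn_of_deriv_nonneg (convex_Icc c d) hcont
    · intro x hx
      rw [interior_Icc] at hx
      exact (hderiv x hx).differentiableAt.differentiableWithinAt
    · intro x hx
      rw [interior_Icc] at hx
      rw [(hderiv x hx).deriv]
      exact hpos x hx
  have hu : MonotoneOn (fun x => M * Real.log x - g x) (Set.Icc c d) := by
    apply mono_aux _ (fun x => M / x - g' x) (hlogc.sub hgc)
      (fun x hx => (hder x hx).sub (hg' x hx))
    intro x hx
    have := (abs_le.1 (hb x hx)).2
    linarith
  have hv : MonotoneOn (fun x => M * Real.log x + g x) (Set.Icc c d) := by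
    apply mono_aux _ (fun x => M / x + g' x) (hlogc.add hgc)
      (fun x hx => (hder x hx).add (hg' x hx))
    intro x hx
    have := (abs_le.1 (hb x hx)).1
    linarith
  intro t ht s hs hts
  have h1 := hu ht hs hts
  have h2 := hv ht hs hts
  simp only at h1 h2
  rw [abs_le]
  constructor <;> nlinarith

theorem ostrowski_identric_midpoint (a b : ℝ) (ha : 0 < a) (hab : a < b)
    (f f' : ℝ → ℝ) (M₁ M₂ : ℝ)
    (hfc : ContinuousOn f (Set.Icc a b))
    (hf' : ∀ t ∈ Set.Ioo a b \ {(a + b) / 2}, HasDerivAt f (f' t) t)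
    (hM₁ : ∀ t ∈ Set.Ioo a ((a + b) / 2), |f' t| ≤ M₁ / t)
    (hM₂ : ∀ t ∈ Set.Ioo ((a + b) / 2) b, |f' t| ≤ M₂ / t) :
    |f ((a + b) / 2) - (1 / (b - a)) * ∫ t in a..b, f t| ≤
      (M₁ / 2) * (Real.log ((a + b) / 2) -
          (2 / (b - a)) * ∫ t in a..(a + b) / 2, Real.log t) +
      (M₂ / 2) * ((2 / (b - a)) * (∫ t in ((a + b) / 2)..b, Real.log t) -
          Real.log ((a + b) / 2)) := by
  set A := (a + b) / 2 with hA
  have haA : a < A := by rw [hA]; linarith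
  have hAb : A < b := by rw [hA]; linarith
  have hA0 : 0 < A := ha.trans haA
  have hba : (0:ℝ) < b - a := by linarith
  have hfc1 : ContinuousOn f (Set.Icc a A) := hfc.mono (Icc_subset_Icc le_rfl hAb.le)
  have hfc2 : ContinuousOn f (Set.Icc A b) := hfc.mono (Icc_subset_Icc haA.le le_rfl)
  have key1 : ∀ t ∈ Set.Icc a A, |f A - f t| ≤ M₁ * (Real.log A - Real.log t) := by
    intro t ht
    exact log_bound_aux M₁ a A ha f f' hfc1
      (fun x hx => hf' x ⟨⟨hx.1, hx.2.trans hAb⟩, ne_of_lt hx.2⟩) hM₁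
      t ht A ⟨haA.le, le_rfl⟩ ht.2
  have key2 : ∀ t ∈ Set.Icc A b, |f t - f A| ≤ M₂ * (Real.log t - Real.log A) := by
    intro t ht
    exact log_bound_aux M₂ A b hA0 f f' hfc2
      (fun x hx => hf' x ⟨⟨haA.trans hx.1, hx.2⟩, ne_of_gt hx.1⟩) hM₂
      A ⟨le_rfl, hAb.le⟩ t ht ht.1
  have hcg1 : ContinuousOn (fun t => f A - f t) (Set.Icc a A) := continuousOn_const.sub hfc1
  have hcg2 : ContinuousOn (fun t => f A - f t) (Set.Icc A b) := continuousOn_const.sub hfc2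
  have hi1 : IntervalIntegrable (fun t => f A - f t) MeasureTheory.volume a A :=
    hcg1.intervalIntegrable_of_Icc haA.le
  have hi2 : IntervalIntegrable (fun t => f A - f t) MeasureTheory.volume A b :=
    hcg2.intervalIntegrable_of_Icc hAb.le
  have hclog : ∀ c d : ℝ, 0 < c → ContinuousOn Real.log (Set.Icc c d) :=
    fun c d hc => Real.continuousOn_log.mono (fun x hx => ne_of_gt (lt_of_lt_of_le hc hx.1))
  have hilog1 : IntervalIntegrable Real.log MeasureTheory.volume a A :=
    (hclog a A ha).intervalIntegrable_of_Icc haA.le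
  have hilog2 : IntervalIntegrable Real.log MeasureTheory.volume A b :=
    (hclog A b hA0).intervalIntegrable_of_Icc hAb.le
  have hib1 : IntervalIntegrable (fun t => M₁ * (Real.log A - Real.log t))
      MeasureTheory.volume a A :=
    (intervalIntegrable_const.sub hilog1).const_mul M₁
  have hib2 : IntervalIntegrable (fun t => M₂ * (Real.log t - Real.log A))
      MeasureTheory.volume A b :=
    (hilog2.sub intervalIntegrable_const).const_mul M₂
  have hIabs1 : |∫ t in a..A, (f A - f t)| ≤
      M₁ * ((A - a) * Real.log A - ∫ t in a..A, Real.log t) := by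
    calc |∫ t in a..A, (f A - f t)| ≤ ∫ t in a..A, |f A - f t| := by
          simpa using intervalIntegral.abs_integral_le_integral_abs haA.le
      _ ≤ ∫ t in a..A, M₁ * (Real.log A - Real.log t) := by
          apply intervalIntegral.integral_mono_on haA.le (hi1.abs) hib1
          exact key1
      _ = M₁ * ((A - a) * Real.log A - ∫ t in a..A, Real.log t) := by
          rw [intervalIntegral.integral_const_mul,
            intervalIntegral.integral_sub intervalIntegrable_const hilog1,
            intervalIntegral.integral_const]
          rw [smul_eq_mul]
  have hIabs2 : |∫ t in A..b, (f A - f t)| ≤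
      M₂ * ((∫ t in A..b, Real.log t) - (b - A) * Real.log A) := by
    calc |∫ t in A..b, (f A - f t)| ≤ ∫ t in A..b, |f A - f t| := by
          simpa using intervalIntegral.abs_integral_le_integral_abs hAb.le
      _ ≤ ∫ t in A..b, M₂ * (Real.log t - Real.log A) := by
          apply intervalIntegral.integral_mono_on hAb.le (hi2.abs) hib2
          intro t ht
          rw [abs_sub_comm]
          exact key2 t ht
      _ = M₂ * ((∫ t in A..b, Real.log t) - (b - A) * Real.log A) := by
          rw [intervalIntegral.integral_const_mul,
            intervalIntegral.integral_sub hilog2 intervalIntegrable_const,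
            intervalIntegral.integral_const]
          rw [smul_eq_mul]
  have hif : IntervalIntegrable f MeasureTheory.volume a b :=
    hfc.intervalIntegrable_of_Icc hab.le
  have hsplit : ∫ t in a..b, (f A - f t) =
      (∫ t in a..A, (f A - f t)) + ∫ t in A..b, (f A - f t) :=
    (intervalIntegral.integral_add_adjacent_intervals hi1 hi2).symm
  have hint : ∫ t in a..b, (f A - f t) = (b - a) * f A - ∫ t in a..b, f t := by
    rw [intervalIntegral.integral_sub intervalIntegrable_const hif,
      intervalIntegral.integral_const]
    rw [smul_eq_mul]
  have hLHS : f A - (1 / (b - a)) * ∫ t in a..b, f t =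
      (1 / (b - a)) * ∫ t in a..b, (f A - f t) := by
    rw [hint]; field_simp
  rw [hLHS, abs_mul, abs_of_pos (by positivity : (0:ℝ) < 1 / (b - a))]
  have hchain : |∫ t in a..b, (f A - f t)| ≤
      M₁ * ((A - a) * Real.log A - ∫ t in a..A, Real.log t) +
      M₂ * ((∫ t in A..b, Real.log t) - (b - A) * Real.log A) := by
    rw [hsplit]
    exact (abs_add_le _ _).trans (add_le_add hIabs1 hIabs2)
  have hfin := mul_le_mul_of_nonneg_left hchain
    (le_of_lt (by positivity : (0:ℝ) < 1 / (b - a)))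
  refine hfin.trans_eq ?_
  have hAa : A - a = (b - a) / 2 := by rw [hA]; ring
  have hbA : b - A = (b - a) / 2 := by rw [hA]; ring
  rw [hAa, hbA]
  field_simp
end

section
/- Let f, g : [a,b] → ℝ be continuous on [a,b], differentiable on (a,b) with g' nonvanishing and |f'/g'| ≤ K on (a,b), let w : [a,b] → [0,∞) be integrable with ∫_a^b w > 0, and let x₀ ∈ [a,b] satisfy ∫_a^{x₀} w(t) dt = ∫_{x₀}^b w(t) dt. Then |f(x₀) - (∫_a^b w f)/(∫_a^b w)| ≤ |∫_{x₀}^b w(t)g(t) dt - ∫_a^{x₀} w(t)g(t) dt| / (∫_a^b w(t) dt) · K. -/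
/-!
By Cauchy's mean value theorem `|f x₀ - f t| ≤ K |g x₀ - g t|` on `[a, b]`, so the deviation of
`f x₀` from the `w`-average of `f` is at most `K` times the `w`-mean absolute deviation of `g`
from `g x₀`. Since `g'` never vanishes, `g` is monotone on `[a, b]`; then `|g x₀ - g t|` is
`± (g t - g x₀)` on either side of `x₀`, and because `x₀` splits the mass of `w` in half the terms
in `g x₀` cancel, leaving `|∫_{x₀}^b w g - ∫_a^{x₀} w g|`.
-/

open Set MeasureTheory intervalIntegral

theorem abs_sub_le_mul_abs_sub_of_abs_div_le {f g f' g' : ℝ → ℝ} {a b K : ℝ}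
    (hfc : ContinuousOn f (Icc a b)) (hgc : ContinuousOn g (Icc a b))
    (hf' : ∀ t ∈ Ioo a b, HasDerivAt f (f' t) t) (hg' : ∀ t ∈ Ioo a b, HasDerivAt g (g' t) t)
    (hg0 : ∀ t ∈ Ioo a b, g' t ≠ 0) (hK : ∀ t ∈ Ioo a b, |f' t / g' t| ≤ K)
    {s t : ℝ} (hs : s ∈ Icc a b) (ht : t ∈ Icc a b) :
    |f t - f s| ≤ K * |g t - g s| := by
  wlog hst : s < t generalizing s t
  · rcases (not_lt.1 hst).eq_or_lt with rfl | hts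
    · simp
    · rw [abs_sub_comm, abs_sub_comm (g t)]
      exact this ht hs hts
  have hIoo : Ioo s t ⊆ Ioo a b := Ioo_subset_Ioo hs.1 ht.2
  have hIcc : Icc s t ⊆ Icc a b := Icc_subset_Icc hs.1 ht.2
  obtain ⟨c, hc, hslope⟩ := exists_ratio_hasDerivAt_eq_ratio_slope f f' hst (hfc.mono hIcc)
    (fun x hx => hf' x (hIoo hx)) g g' (hgc.mono hIcc) (fun x hx => hg' x (hIoo hx))
  have hg'c : g' c ≠ 0 := hg0 c (hIoo hc)
  have hfg : f t - f s = (g t - g s) * (f' c / g' c) := by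
    field_simp
    linarith
  rw [hfg, abs_mul, mul_comm K]
  exact mul_le_mul_of_nonneg_left (hK c (hIoo hc)) (abs_nonneg _)

theorem injOn_Icc_of_hasDerivAt_ne_zero {g g' : ℝ → ℝ} {a b : ℝ}
    (hgc : ContinuousOn g (Icc a b)) (hg' : ∀ t ∈ Ioo a b, HasDerivAt g (g' t) t)
    (hg0 : ∀ t ∈ Ioo a b, g' t ≠ 0) : InjOn g (Icc a b) := by
  intro s hs t ht hgst
  by_contra hne
  wlog hst : s < t generalizing s t
  · exact this ht hs hgst.symm (Ne.symm hne) ((not_lt.1 hst).lt_of_ne (Ne.symm hne))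
  have hIoo : Ioo s t ⊆ Ioo a b := Ioo_subset_Ioo hs.1 ht.2
  obtain ⟨c, hc, hc0⟩ := exists_hasDerivAt_eq_zero hst (hgc.mono (Icc_subset_Icc hs.1 ht.2))
    hgst fun x hx => hg' x (hIoo hx)
  exact hg0 c (hIoo hc) hc0

theorem monotoneOn_or_antitoneOn_of_hasDerivAt_ne_zero {g g' : ℝ → ℝ} {a b : ℝ} (hab : a ≤ b)
    (hgc : ContinuousOn g (Icc a b)) (hg' : ∀ t ∈ Ioo a b, HasDerivAt g (g' t) t)
    (hg0 : ∀ t ∈ Ioo a b, g' t ≠ 0) : MonotoneOn g (Icc a b) ∨ AntitoneOn g (Icc a b) :=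
  (hgc.strictMonoOn_of_injOn_Icc' hab (injOn_Icc_of_hasDerivAt_ne_zero hgc hg' hg0)).imp
    StrictMonoOn.monotoneOn StrictAntiOn.antitoneOn

theorem abs_sub_integral_mul_div_integral_le {a b y : ℝ} {w f φ : ℝ → ℝ} (hab : a ≤ b)
    (hw : IntervalIntegrable w volume a b) (hw0 : ∀ t ∈ Icc a b, 0 ≤ w t)
    (hwpos : 0 < ∫ t in a..b, w t)
    (hwf : IntervalIntegrable (fun t => w t * f t) volume a b)
    (hwφ : IntervalIntegrable (fun t => w t * φ t) volume a b)
    (hφ : ∀ t ∈ Icc a b, |y - f t| ≤ φ t) :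
    |y - (∫ t in a..b, w t * f t) / ∫ t in a..b, w t| ≤
      (∫ t in a..b, w t * φ t) / ∫ t in a..b, w t := by
  have hdev : y - (∫ t in a..b, w t * f t) / (∫ t in a..b, w t) =
      (∫ t in a..b, w t * (y - f t)) / ∫ t in a..b, w t := by
    simp only [mul_sub]
    rw [integral_sub (hw.mul_const y) hwf, intervalIntegral.integral_mul_const]
    field_simp
  have hwdev : IntervalIntegrable (fun t => w t * (y - f t)) volume a b := by
    simpa only [mul_sub] using (hw.mul_const y).sub hwf
  rw [hdev, abs_div, abs_of_pos hwpos]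
  gcongr
  calc |∫ t in a..b, w t * (y - f t)|
      ≤ ∫ t in a..b, |w t * (y - f t)| := abs_integral_le_integral_abs hab
    _ ≤ ∫ t in a..b, w t * φ t := by
      refine integral_mono_on hab hwdev.abs hwφ fun t ht => ?_
      rw [abs_mul, abs_of_nonneg (hw0 t ht)]
      exact mul_le_mul_of_nonneg_left (hφ t ht) (hw0 t ht)

theorem integral_mul_abs_sub_eq_of_monotoneOn {a b x₀ : ℝ} {w g : ℝ → ℝ}
    (hw : IntervalIntegrable w volume a b) (hgc : ContinuousOn g (Icc a b))
    (hg : MonotoneOn g (Icc a b)) (hx₀ : x₀ ∈ Icc a b)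
    (hmed : ∫ t in a..x₀, w t = ∫ t in x₀..b, w t) :
    ∫ t in a..b, w t * |g x₀ - g t| =
      (∫ t in x₀..b, w t * g t) - ∫ t in a..x₀, w t * g t := by
  obtain ⟨hax, hxb⟩ := hx₀
  have hx₀' : x₀ ∈ uIcc a b := by rw [uIcc_of_le (hax.trans hxb)]; exact ⟨hax, hxb⟩
  have hgc' : ContinuousOn g (uIcc a b) := by rwa [uIcc_of_le (hax.trans hxb)]
  have hw₁ := hw.mono_set (uIcc_subset_uIcc_left hx₀')
  have hw₂ := hw.mono_set (uIcc_subset_uIcc_right hx₀')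
  have hwg₁ := hw₁.mul_continuousOn (hgc'.mono (uIcc_subset_uIcc_left hx₀'))
  have hwg₂ := hw₂.mul_continuousOn (hgc'.mono (uIcc_subset_uIcc_right hx₀'))
  have hwabs : IntervalIntegrable (fun t => w t * |g x₀ - g t|) volume a b :=
    hw.mul_continuousOn (continuousOn_const.sub hgc').abs
  have hleft : ∫ t in a..x₀, w t * |g x₀ - g t| = ∫ t in a..x₀, (w t * g x₀ - w t * g t) := by
    refine integral_congr fun t ht => ?_
    rw [uIcc_of_le hax] at ht
    rw [abs_of_nonneg (sub_nonneg.2 (hg ⟨ht.1, ht.2.trans hxb⟩ ⟨hax, hxb⟩ ht.2)), mul_sub]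
  have hright : ∫ t in x₀..b, w t * |g x₀ - g t| = ∫ t in x₀..b, (w t * g t - w t * g x₀) := by
    refine integral_congr fun t ht => ?_
    rw [uIcc_of_le hxb] at ht
    rw [abs_of_nonpos (sub_nonpos.2 (hg ⟨hax, hxb⟩ ⟨hax.trans ht.1, ht.2⟩ ht.1))]
    ring
  rw [← integral_add_adjacent_intervals (hwabs.mono_set (uIcc_subset_uIcc_left hx₀'))
    (hwabs.mono_set (uIcc_subset_uIcc_right hx₀')), hleft, hright,
    integral_sub (hw₁.mul_const _) hwg₁, integral_sub hwg₂ (hw₂.mul_const _),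
    intervalIntegral.integral_mul_const, intervalIntegral.integral_mul_const, hmed]
  ring

theorem integral_mul_abs_sub_eq_abs_of_monotoneOn_or_antitoneOn {a b x₀ : ℝ} {w g : ℝ → ℝ}
    (hw : IntervalIntegrable w volume a b) (hw0 : ∀ t ∈ Icc a b, 0 ≤ w t)
    (hgc : ContinuousOn g (Icc a b)) (hg : MonotoneOn g (Icc a b) ∨ AntitoneOn g (Icc a b))
    (hx₀ : x₀ ∈ Icc a b) (hmed : ∫ t in a..x₀, w t = ∫ t in x₀..b, w t) :
    ∫ t in a..b, w t * |g x₀ - g t| =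
      |(∫ t in x₀..b, w t * g t) - ∫ t in a..x₀, w t * g t| := by
  have hnonneg : 0 ≤ ∫ t in a..b, w t * |g x₀ - g t| :=
    integral_nonneg (hx₀.1.trans hx₀.2) fun t ht => mul_nonneg (hw0 t ht) (abs_nonneg _)
  rcases hg with hmono | hanti
  · rw [← integral_mul_abs_sub_eq_of_monotoneOn hw hgc hmono hx₀ hmed, abs_of_nonneg hnonneg]
  · have hneg := integral_mul_abs_sub_eq_of_monotoneOn hw hgc.neg hanti.neg hx₀ hmed
    simp only [Pi.neg_apply, neg_sub_neg, mul_neg, intervalIntegral.integral_neg] at hneg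
    simp_rw [abs_sub_comm (g x₀)] at hnonneg ⊢
    rw [hneg] at hnonneg ⊢
    rw [abs_of_nonpos (by linarith)]
    ring

theorem ostrowski_cauchy_weighted_median (a b : ℝ) (hab : a < b) (f g f' g' : ℝ → ℝ) (K : ℝ)
    (w : ℝ → ℝ)
    (hfc : ContinuousOn f (Set.Icc a b)) (hgc : ContinuousOn g (Set.Icc a b))
    (hf' : ∀ t ∈ Set.Ioo a b, HasDerivAt f (f' t) t)
    (hg' : ∀ t ∈ Set.Ioo a b, HasDerivAt g (g' t) t)
    (hg0 : ∀ t ∈ Set.Ioo a b, g' t ≠ 0)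
    (hK : ∀ t ∈ Set.Ioo a b, |f' t / g' t| ≤ K)
    (hw : IntervalIntegrable w MeasureTheory.volume a b)
    (hw0 : ∀ t ∈ Set.Icc a b, 0 ≤ w t)
    (hwpos : 0 < ∫ t in a..b, w t)
    (x₀ : ℝ) (hx₀ : x₀ ∈ Set.Icc a b)
    (hmed : (∫ t in a..x₀, w t) = ∫ t in x₀..b, w t) :
    |f x₀ - (∫ t in a..b, w t * f t) / (∫ t in a..b, w t)| ≤
      |(∫ t in x₀..b, w t * g t) - ∫ t in a..x₀, w t * g t| / (∫ t in a..b, w t) * K := by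
  have hfc' : ContinuousOn f (uIcc a b) := by rwa [uIcc_of_le hab.le]
  have hgc' : ContinuousOn g (uIcc a b) := by rwa [uIcc_of_le hab.le]
  have hcauchy : ∀ t ∈ Icc a b, |f x₀ - f t| ≤ K * |g x₀ - g t| := fun t ht =>
    abs_sub_le_mul_abs_sub_of_abs_div_le hfc hgc hf' hg' hg0 hK ht hx₀
  have hwg : IntervalIntegrable (fun t => w t * (K * |g x₀ - g t|)) volume a b :=
    hw.mul_continuousOn (continuousOn_const.mul (continuousOn_const.sub hgc').abs)
  have hg_mono := monotoneOn_or_antitoneOn_of_hasDerivAt_ne_zero hab.le hgc hg' hg0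
  calc |f x₀ - (∫ t in a..b, w t * f t) / (∫ t in a..b, w t)|
      ≤ (∫ t in a..b, w t * (K * |g x₀ - g t|)) / ∫ t in a..b, w t :=
        abs_sub_integral_mul_div_integral_le hab.le hw hw0 hwpos (hw.mul_continuousOn hfc') hwg
          hcauchy
    _ = |(∫ t in x₀..b, w t * g t) - ∫ t in a..x₀, w t * g t| / (∫ t in a..b, w t) * K := by
      simp_rw [mul_left_comm (w _) K]
      rw [intervalIntegral.integral_const_mul,
        integral_mul_abs_sub_eq_abs_of_monotoneOn_or_antitoneOn hw hw0 hgc hg_mono hx₀ hmed]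
      ring
end
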